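/- Let G be a graph containing an induced path v_1 v_2 v_3 v_4 such that the degrees in G satisfy d(v_1) = d(v_4) = 1 and d(v_2) = 2. Then G is not well-ve-dominated. -/

import Mathlib

open SimpleGraph

/-- A vertex `v` ve-dominates an edge `e` if at least one endpoint of `e`
lies in the closed neighborhood `N[v]` of `v`. -/
def VEDominates {V : Type*} (G : SimpleGraph V) (v : V) (e : Sym2 V) : Prop :=
  ∃ x ∈ e, x = v ∨ G.Adj v x

/-- `D` is a ve-dominating set of `G`: every edge of `G` is ve-dominated
by some vertex of `D`. -/
def IsVEDomSet {V : Type*} (G : SimpleGraph V) (D : Set V) : Prop :=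
  ∀ e ∈ G.edgeSet, ∃ v ∈ D, VEDominates G v e

/-- `D` is a minimal ve-dominating set of `G`: it is ve-dominating and no
proper subset of `D` is ve-dominating. -/
def IsMinimalVEDomSet {V : Type*} (G : SimpleGraph V) (D : Set V) : Prop :=
  IsVEDomSet G D ∧ ∀ D' : Set V, D' ⊂ D → ¬ IsVEDomSet G D'

/-- `G` is well-ve-dominated: all minimal ve-dominating sets have the same
cardinality. -/
def WellVEDominated {V : Type*} (G : SimpleGraph V) : Prop :=
  ∀ D₁ D₂ : Set V, IsMinimalVEDomSet G D₁ → IsMinimalVEDomSet G D₂ →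
    D₁.ncard = D₂.ncard

/-- `γ_ve(G)`: the minimum cardinality of a ve-dominating set of `G`. -/
noncomputable def gammaVE {V : Type*} (G : SimpleGraph V) : ℕ :=
  sInf {n | ∃ D : Set V, IsVEDomSet G D ∧ D.ncard = n}

/-- `G` is reduced: no two distinct vertices share the same open neighborhood. -/
def Reduced {V : Type*} (G : SimpleGraph V) : Prop :=
  ∀ x y : V, G.neighborSet x = G.neighborSet y → x = y

/-- `s l` form a good pendant edge of `G`: `l` is a leaf (degree 1) and its
support vertex `s` has degree 2. -/
def IsGoodPendant {V : Type*} (G : SimpleGraph V) (s l : V) : Prop :=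
  G.Adj s l ∧ (G.neighborSet l).ncard = 1 ∧ (G.neighborSet s).ncard = 2

/-- `L_T`: the leaf endpoints of the good pendant edges. -/
def goodLeaves {V : Type*} (G : SimpleGraph V) : Set V :=
  {l | ∃ s, IsGoodPendant G s l}

/-- `S_T`: the support vertices of the good pendant edges. -/
def goodSupports {V : Type*} (G : SimpleGraph V) : Set V :=
  {s | ∃ l, IsGoodPendant G s l}

/-- `W_T = N(S_T) \ L_T`: non-leaf neighbors of support vertices of good
pendant edges. -/
def goodW {V : Type*} (G : SimpleGraph V) : Set V :=
  {v | ∃ s ∈ goodSupports G, G.Adj v s} \ goodLeaves G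

/-- The set of good pendant edges of `G`. -/
def goodPendantEdges {V : Type*} (G : SimpleGraph V) : Set (Sym2 V) :=
  {e | ∃ s l, IsGoodPendant G s l ∧ e = s(s, l)}

/-!
Let `S` be the set of edges not ve-dominated by `v₂` and `A` the set of vertices that do not
ve-dominate `v₁v₂`, i.e. those outside `N[v₂] = {v₁, v₂, v₃}`. For every minimal cover `E ⊆ A`
of `S`, the set `{v₂} ∪ E` is a minimal ve-dominating set.

If such an `E` can avoid the vertices that ve-dominate `v₃v₄`, then `{v₁, v₄} ∪ E` is a minimal
ve-dominating set too, and it is one element larger. Otherwise some edge `f ∈ S` is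
ve-dominated, within `A`, only by vertices that also ve-dominate `v₃v₄`. Choose `f` with an
inclusion-minimal set of such dominators. Then an endpoint `a` of `f` lies in a minimal cover `E`,
and every edge that `a` ve-dominates is already ve-dominated by `v₃`. So `{v₃} ∪ (E \ {a})` is
ve-dominating, and every minimal ve-dominating subset of it is smaller than `{v₂} ∪ E`.
-/

section Covers

variable {α β : Type*}

def Covers (r : α → β → Prop) (D : Set α) (S : Set β) : Prop :=
  ∀ e ∈ S, ∃ v ∈ D, r v e

variable {r : α → β → Prop} {D E A K : Set α} {S : Set β} {u : α}

theorem Covers.mono_left {D' : Set α} (h : Covers r D S) (hD : D ⊆ D') : Covers r D' S :=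
  fun e he => (h e he).imp fun _ ⟨hv, hve⟩ => ⟨hD hv, hve⟩

theorem covers_insert_iff : Covers r (insert u D) S ↔ Covers r D {e ∈ S | ¬ r u e} := by
  simp only [Covers, Set.mem_ofPred_eq, Set.exists_mem_insert, and_imp]
  exact ⟨fun h e he hu => (h e he).resolve_left hu,
    fun h e he => or_iff_not_imp_left.2 (h e he)⟩

theorem Minimal.covers_insert (hE : Minimal (Covers r · {e ∈ S | ¬ r u e}) E)
    {e₀ : β} (he₀ : e₀ ∈ S) (hE₀ : ∀ c ∈ E, ¬ r c e₀) :
    Minimal (Covers r · S) (insert u E) := by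
  refine ⟨covers_insert_iff.2 hE.prop, fun D hD hDE => ?_⟩
  have hu : u ∈ D := by
    obtain ⟨c, hc, hce⟩ := hD e₀ he₀
    obtain rfl | hcE := hDE hc
    · exact hc
    · exact absurd hce (hE₀ c hcE)
  have hE_le : E ≤ D \ {u} :=
    hE.2 (covers_insert_iff.1 (hD.mono_left (by simp [hu])))
      (Set.sdiff_singleton_subset_iff.2 hDE)
  exact Set.insert_subset hu (hE_le.trans Set.sdiff_subset)

theorem Covers.exists_minimal_subset [Finite α] (h : Covers r D S) :
    ∃ E ⊆ D, Minimal (Covers r · S) E :=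
  exists_minimal_le_of_wellFoundedLT _ D h

theorem exists_minimal_covers_of_not_covers_diff [Finite α]
    (hAK : ¬ Covers r (A \ K) S) :
    ∃ f ∈ S, (∀ c ∈ A, r c f → c ∈ K) ∧
      ∀ a ∈ A, r a f → ∃ E ⊆ A, a ∈ E ∧ Minimal (Covers r · S) E := by
  let coverers (e : β) : Set α := {c ∈ A | r c e}
  have hbad : ∃ f, f ∈ S ∧ coverers f ⊆ K := by
    simp only [Covers, not_forall] at hAK
    obtain ⟨f, hf, hfK⟩ := hAK
    exact ⟨f, hf, fun c ⟨hcA, hcf⟩ => by_contra fun hcK => hfK ⟨c, ⟨hcA, hcK⟩, hcf⟩⟩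
  obtain ⟨f, ⟨hf, hfK⟩, hfmin⟩ :=
    exists_minimalFor_of_wellFoundedLT (fun f => f ∈ S ∧ coverers f ⊆ K) coverers hbad
  refine ⟨f, hf, fun c hcA hcf => hfK ⟨hcA, hcf⟩, fun a haA haf => ?_⟩
  -- a target missed by `Z` would have a strictly smaller set of coverers than `f`
  have hZ : Covers r (insert a (A \ coverers f)) S := by
    intro e he
    by_contra! hne
    have hef : coverers e ⊆ coverers f := fun c ⟨hcA, hce⟩ =>
      by_contra fun hcf => hne c (Set.mem_insert_of_mem _ ⟨hcA, hcf⟩) hce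
    have hfe := hfmin ⟨he, hef.trans hfK⟩ hef
    exact hne a (Set.mem_insert _ _) (hfe ⟨haA, haf⟩).2
  obtain ⟨E, hEZ, hE⟩ := hZ.exists_minimal_subset
  refine ⟨E, hEZ.trans (Set.insert_subset haA Set.sdiff_subset), ?_, hE⟩
  obtain ⟨c, hcE, hcf⟩ := hE.prop f hf
  obtain rfl | ⟨hcA, hcf'⟩ := hEZ hcE
  · exact hcE
  · exact absurd ⟨hcA, hcf⟩ hcf'

end Covers

section PendantPath

variable {V : Type*} {G : SimpleGraph V}

theorem veDominates_mk_iff {v x y : V} :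
    VEDominates G v s(x, y) ↔ (x = v ∨ G.Adj v x) ∨ (y = v ∨ G.Adj v y) := by
  simp [VEDominates]

theorem veDominates_of_mem {v : V} {e : Sym2 V} (h : v ∈ e) : VEDominates G v e :=
  ⟨v, h, Or.inl rfl⟩

theorem isMinimalVEDomSet_iff_minimal {D : Set V} :
    IsMinimalVEDomSet G D ↔ Minimal (Covers (VEDominates G) · G.edgeSet) D := by
  rw [minimal_iff_forall_lt]; rfl

theorem neighborSet_eq_of_subset_of_ncard_eq {v : V} {s : Set V} (hs : s ⊆ G.neighborSet v)
    (hcard : (G.neighborSet v).ncard = s.ncard) (hs0 : s.ncard ≠ 0) : G.neighborSet v = s :=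
  (Set.eq_of_subset_of_ncard_le hs hcard.le (Set.finite_of_ncard_ne_zero (hcard ▸ hs0))).symm

structure IsPendantPath (G : SimpleGraph V) (v₁ v₂ v₃ v₄ : V) : Prop where
  adj₁ : ∀ x, G.Adj v₁ x ↔ x = v₂
  adj₂ : ∀ x, G.Adj v₂ x ↔ x = v₁ ∨ x = v₃
  adj₄ : ∀ x, G.Adj v₄ x ↔ x = v₃
  ne₁₃ : v₁ ≠ v₃

theorem isPendantPath_of_embedding (f : pathGraph 4 ↪g G)
    (hd₁ : (G.neighborSet (f 0)).ncard = 1) (hd₄ : (G.neighborSet (f 3)).ncard = 1)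
    (hd₂ : (G.neighborSet (f 1)).ncard = 2) : IsPendantPath G (f 0) (f 1) (f 2) (f 3) := by
  have hadj (i j : Fin 4) (h : i.val + 1 = j.val) : G.Adj (f i) (f j) :=
    f.map_adj_iff.2 (pathGraph_adj.2 (Or.inl h))
  have hne₁₃ : f 0 ≠ f 2 := f.injective.ne (by decide)
  have hN₁ : G.neighborSet (f 0) = {f 1} :=
    neighborSet_eq_of_subset_of_ncard_eq (by simpa using hadj 0 1 rfl) (by simp [hd₁]) (by simp)
  have hN₄ : G.neighborSet (f 3) = {f 2} :=
    neighborSet_eq_of_subset_of_ncard_eq (by simpa using (hadj 2 3 rfl).symm) (by simp [hd₄])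
      (by simp)
  have hN₂ : G.neighborSet (f 1) = {f 0, f 2} :=
    neighborSet_eq_of_subset_of_ncard_eq
      (by simp [Set.insert_subset_iff, (hadj 0 1 rfl).symm, hadj 1 2 rfl])
      (by simp [hd₂, Set.ncard_pair hne₁₃]) (by simp [Set.ncard_pair hne₁₃])
  refine ⟨fun x => ?_, fun x => ?_, fun x => ?_, hne₁₃⟩ <;>
    simp [← mem_neighborSet, hN₁, hN₂, hN₄]

namespace IsPendantPath

variable {v₁ v₂ v₃ v₄ : V}

theorem adj₁₂ (P : IsPendantPath G v₁ v₂ v₃ v₄) : G.Adj v₁ v₂ := (P.adj₁ v₂).2 rfl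

theorem adj₃₄ (P : IsPendantPath G v₁ v₂ v₃ v₄) : G.Adj v₃ v₄ := ((P.adj₄ v₃).2 rfl).symm

theorem ne₂₃ (P : IsPendantPath G v₁ v₂ v₃ v₄) : v₂ ≠ v₃ :=
  G.ne_of_adj ((P.adj₂ v₃).2 (Or.inr rfl))

theorem not_veDominates_v₁_v₃v₄ (P : IsPendantPath G v₁ v₂ v₃ v₄) :
    ¬ VEDominates G v₁ s(v₃, v₄) := by
  rw [veDominates_mk_iff]
  grind [G.adj_symm, P.adj₁, P.adj₂, P.adj₄, P.ne₁₃, P.ne₂₃]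

theorem not_veDominates_v₄_v₁v₂ (P : IsPendantPath G v₁ v₂ v₃ v₄) :
    ¬ VEDominates G v₄ s(v₁, v₂) := by
  rw [veDominates_mk_iff]
  grind [G.adj_symm, P.adj₁, P.adj₂, P.adj₄, P.ne₁₃, P.ne₂₃]

theorem veDominates_v₂_of_veDominates_v₁v₂ (P : IsPendantPath G v₁ v₂ v₃ v₄)
    {x : V} {e : Sym2 V}
    (hx : VEDominates G x s(v₁, v₂)) (hxe : x ∈ e) : VEDominates G v₂ e := by
  refine ⟨x, hxe, ?_⟩
  rw [veDominates_mk_iff] at hx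
  grind [G.adj_symm, P.adj₁, P.adj₂]

theorem veDominates_v₃_of_veDominates_v₃v₄ (P : IsPendantPath G v₁ v₂ v₃ v₄)
    {x : V} {e : Sym2 V}
    (hx : VEDominates G x s(v₃, v₄)) (hxe : x ∈ e) (he : e ∈ G.edgeSet) :
    VEDominates G v₃ e := by
  rw [veDominates_mk_iff] at hx
  induction e using Sym2.inductionOn with | _ y z =>
  simp only [mem_edgeSet] at he
  rw [veDominates_mk_iff]
  simp only [Sym2.mem_iff] at hxe
  grind [G.adj_symm, P.adj₄]

theorem veDominates_v₃_of_veDominates_v₂ (P : IsPendantPath G v₁ v₂ v₃ v₄) {e : Sym2 V}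
    (h : VEDominates G v₂ e) (he : e ∈ G.edgeSet) : VEDominates G v₃ e := by
  induction e using Sym2.inductionOn with | _ y z =>
  simp only [mem_edgeSet] at he
  rw [veDominates_mk_iff] at h ⊢
  grind [G.adj_symm, P.adj₁, P.adj₂]

theorem veDominates_v₂_iff (P : IsPendantPath G v₁ v₂ v₃ v₄) {e : Sym2 V} (he : e ∈ G.edgeSet) :
    VEDominates G v₂ e ↔ VEDominates G v₁ e ∨ VEDominates G v₄ e := by
  induction e using Sym2.inductionOn with | _ y z =>
  simp only [mem_edgeSet] at he
  simp only [veDominates_mk_iff]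
  grind [G.adj_symm, P.adj₁, P.adj₂, P.adj₄]

theorem veDominates_v₃_of_veDominates (P : IsPendantPath G v₁ v₂ v₃ v₄) {a : V} {f e : Sym2 V}
    (haf : a ∈ f) (hf : ¬ VEDominates G v₂ f)
    (hK : ∀ c, ¬ VEDominates G c s(v₁, v₂) → VEDominates G c f → VEDominates G c s(v₃, v₄))
    (he : e ∈ G.edgeSet) (hae : VEDominates G a e) : VEDominates G v₃ e := by
  obtain ⟨y, hye, hy⟩ := hae
  -- `y ∈ N[a]`: either `y` ve-dominates `f` too, or `y ∈ N[v₂]`, which forces `y = v₃`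
  by_cases hy₁₂ : VEDominates G y s(v₁, v₂)
  · have ha₂ : ¬ (a = v₂ ∨ G.Adj v₂ a) := fun h => hf ⟨a, haf, h⟩
    refine ⟨y, hye, ?_⟩
    rw [veDominates_mk_iff] at hy₁₂
    grind [G.adj_symm, P.adj₁, P.adj₂]
  · refine P.veDominates_v₃_of_veDominates_v₃v₄ (hK y hy₁₂ ⟨a, haf, ?_⟩) hye he
    exact hy.imp Eq.symm G.adj_symm

theorem minimal_insert_v₂ (P : IsPendantPath G v₁ v₂ v₃ v₄) {E : Set V}
    (hE_sub : E ⊆ {c | ¬ VEDominates G c s(v₁, v₂)})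
    (hE : Minimal (Covers (VEDominates G) · {e ∈ G.edgeSet | ¬ VEDominates G v₂ e}) E) :
    IsMinimalVEDomSet G (insert v₂ E) :=
  isMinimalVEDomSet_iff_minimal.2 (hE.covers_insert P.adj₁₂ hE_sub)

theorem minimal_insert_v₁_insert_v₄ (P : IsPendantPath G v₁ v₂ v₃ v₄) {E : Set V}
    (hE_sub : E ⊆ {c | ¬ VEDominates G c s(v₁, v₂)} \ {c | VEDominates G c s(v₃, v₄)})
    (hE : Minimal (Covers (VEDominates G) · {e ∈ G.edgeSet | ¬ VEDominates G v₂ e}) E) :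
    IsMinimalVEDomSet G (insert v₁ (insert v₄ E)) := by
  have hS : {e ∈ {e ∈ G.edgeSet | ¬ VEDominates G v₁ e} | ¬ VEDominates G v₄ e} =
      {e ∈ G.edgeSet | ¬ VEDominates G v₂ e} := by
    ext e
    simp only [Set.mem_ofPred_eq]
    grind [P.veDominates_v₂_iff]
  refine isMinimalVEDomSet_iff_minimal.2 (Minimal.covers_insert (e₀ := s(v₁, v₂))
    (Minimal.covers_insert (e₀ := s(v₃, v₄)) (hS ▸ hE) ⟨P.adj₃₄, P.not_veDominates_v₁_v₃v₄⟩
      fun c hc => (hE_sub hc).2) P.adj₁₂ ?_)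
  rintro c (rfl | hc)
  · exact P.not_veDominates_v₄_v₁v₂
  · exact (hE_sub hc).1

theorem isVEDomSet_insert_v₃ (P : IsPendantPath G v₁ v₂ v₃ v₄) {E : Set V} {a : V}
    (hE : Covers (VEDominates G) E {e ∈ G.edgeSet | ¬ VEDominates G v₂ e})
    (ha : ∀ e ∈ G.edgeSet, VEDominates G a e → VEDominates G v₃ e) :
    IsVEDomSet G (insert v₃ (E \ {a})) := by
  refine covers_insert_iff.2 fun e ⟨he, he₃⟩ => ?_
  obtain ⟨c, hcE, hce⟩ := hE e ⟨he, fun he₂ => he₃ (P.veDominates_v₃_of_veDominates_v₂ he₂ he)⟩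
  refine ⟨c, ⟨hcE, ?_⟩, hce⟩
  rintro rfl
  exact he₃ (ha e he hce)

theorem not_wellVEDominated [Finite V] (P : IsPendantPath G v₁ v₂ v₃ v₄) :
    ¬ WellVEDominated G := by
  intro hwell
  set A : Set V := {c | ¬ VEDominates G c s(v₁, v₂)}
  set K : Set V := {c | VEDominates G c s(v₃, v₄)}
  by_cases hgood : Covers (VEDominates G) (A \ K) {e ∈ G.edgeSet | ¬ VEDominates G v₂ e}
  · obtain ⟨E, hE_sub, hE⟩ := hgood.exists_minimal_subset
    have hv₂ : v₂ ∉ E := fun h => (hE_sub h).1 (veDominates_of_mem (Sym2.mem_mk_right _ _))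
    have hv₄ : v₄ ∉ E := fun h => (hE_sub h).2 (veDominates_of_mem (Sym2.mem_mk_right _ _))
    have hv₁ : v₁ ∉ insert v₄ E := by
      rintro (h | h)
      · exact P.not_veDominates_v₄_v₁v₂ (h ▸ veDominates_of_mem (Sym2.mem_mk_left _ _))
      · exact (hE_sub h).1 (veDominates_of_mem (Sym2.mem_mk_left _ _))
    have hcard := hwell _ _ (P.minimal_insert_v₂ (hE_sub.trans Set.sdiff_subset) hE)
      (P.minimal_insert_v₁_insert_v₄ hE_sub hE)
    rw [Set.ncard_insert_of_notMem hv₂, Set.ncard_insert_of_notMem hv₁,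
      Set.ncard_insert_of_notMem hv₄] at hcard
    omega
  · obtain ⟨f, hf, hfK, hmin⟩ := exists_minimal_covers_of_not_covers_diff hgood
    obtain ⟨a, haf⟩ : ∃ a, a ∈ f := ⟨f.out.1, Sym2.out_fst_mem f⟩
    have haA : a ∈ A := fun h => hf.2 (P.veDominates_v₂_of_veDominates_v₁v₂ h haf)
    obtain ⟨E, hE_sub, haE, hE⟩ := hmin a haA (veDominates_of_mem haf)
    obtain ⟨D, hD_sub, hD⟩ := Covers.exists_minimal_subset (S := G.edgeSet)
      (P.isVEDomSet_insert_v₃ hE.prop fun e he => P.veDominates_v₃_of_veDominates haf hf.2 hfK he)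
    have hv₂ : v₂ ∉ E := fun h => hE_sub h (veDominates_of_mem (Sym2.mem_mk_right _ _))
    have hcard := hwell _ _ (P.minimal_insert_v₂ hE_sub hE) (isMinimalVEDomSet_iff_minimal.2 hD)
    have hD_le : D.ncard ≤ E.ncard := calc
      D.ncard ≤ (insert v₃ (E \ {a})).ncard := Set.ncard_le_ncard hD_sub
      _ ≤ (E \ {a}).ncard + 1 := Set.ncard_insert_le _ _
      _ = E.ncard := Set.ncard_sdiff_singleton_add_one haE
    rw [Set.ncard_insert_of_notMem hv₂] at hcard
    omega

end IsPendantPath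

end PendantPath

/-- If `G` has an induced path `v₁v₂v₃v₄` with `d(v₁) = d(v₄) = 1` and
`d(v₂) = 2`, then `G` is not well-ve-dominated. -/
theorem stmt_6 {V : Type*} [Fintype V] (G : SimpleGraph V)
    (f : SimpleGraph.pathGraph 4 ↪g G)
    (hd1 : (G.neighborSet (f 0)).ncard = 1)
    (hd4 : (G.neighborSet (f 3)).ncard = 1)
    (hd2 : (G.neighborSet (f 1)).ncard = 2) :
    ¬ WellVEDominated G :=
  (isPendantPath_of_embedding f hd1 hd4 hd2).not_wellVEDominated
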